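/- Sandwich bound for the ratio of the mixture-of-regressions Gordon maps. For α > 0, β ≥ 0 with ρ = β/α, σ ≥ 0 and κ > 1, define F_σ(α,β) = 1 − A_σ(ρ) + B_σ(ρ) and G_{κ,σ}(α,β) = √( ρ²·B_σ(ρ)² + (1/(κ−1))·(1 + σ² − F_σ(α,β)² − ρ²·B_σ(ρ)²) ). There exists a universal constant C > 0 such that for all σ ≤ 0.5, all κ ≥ C, and all (α, β) with α > 0, β ≥ 0 and ρ = β/α ≤ 2: (1 + 2σ³/(3π))⁻¹ · √( ρ²·B_σ(ρ)²·(κ−2)/(κ−1) + σ²/(2(κ−1)) ) ≤ G_{κ,σ}(α,β)/F_σ(α,β) ≤ (4/5)·ρ + 2σ/√(κ−1). -/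

import Mathlib

noncomputable section

/-- `A_σ(ρ) = (2/π) arctan(√(ρ² + σ² + σ²ρ²))`. -/
def Amap (σ ρ : ℝ) : ℝ :=
  2 / Real.pi * Real.arctan (Real.sqrt (ρ ^ 2 + σ ^ 2 + σ ^ 2 * ρ ^ 2))

/-- `B_σ(ρ) = (2/π) √(ρ² + σ² + σ²ρ²)/(1 + ρ²)`. -/
def Bmap (σ ρ : ℝ) : ℝ :=
  2 / Real.pi * Real.sqrt (ρ ^ 2 + σ ^ 2 + σ ^ 2 * ρ ^ 2) / (1 + ρ ^ 2)

/-- `F_σ(α,β) = 1 − A_σ(ρ) + B_σ(ρ)`, as a function of `ρ = β/α`. -/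
def FmrS (σ ρ : ℝ) : ℝ := 1 - Amap σ ρ + Bmap σ ρ

/-- `G_{κ,σ}(α,β)`, as a function of `ρ = β/α`. -/
def GmrS (κ σ ρ : ℝ) : ℝ :=
  Real.sqrt (ρ ^ 2 * Bmap σ ρ ^ 2 +
    1 / (κ - 1) * (1 + σ ^ 2 - FmrS σ ρ ^ 2 - ρ ^ 2 * Bmap σ ρ ^ 2))

end

section MRHelpers
open Real Set


lemma mono_Ici {f f' : ℝ → ℝ} {a : ℝ} (hf : ∀ x, HasDerivAt f (f' x) x)
    (h0 : ∀ x, a < x → 0 ≤ f' x) : MonotoneOn f (Set.Ici a) :=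
  monotoneOn_of_hasDerivWithinAt_nonneg (convex_Ici a)
    (fun x _ => (hf x).continuousAt.continuousWithinAt)
    (fun x hx => ((hf x).hasDerivWithinAt))
    (fun x hx => h0 x (by simpa [interior_Ici] using hx))

lemma one_add_sq_pos (x : ℝ) : (0:ℝ) < 1 + x ^ 2 := by positivity

lemma L1 {x : ℝ} (hx : 0 ≤ x) : arctan x ≤ x := by
  have hm : MonotoneOn (fun x : ℝ => x - arctan x) (Set.Ici 0) := by
    apply mono_Ici (f' := fun x => 1 - 1 / (1 + x ^ 2))
    · intro x
      exact (hasDerivAt_id x).sub (hasDerivAt_arctan x)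
    · intro x _
      have h := one_add_sq_pos x
      rw [sub_nonneg, div_le_one h]
      nlinarith [sq_nonneg x]
  have := hm (self_mem_Ici) hx hx
  simp only [arctan_zero, sub_zero] at this
  linarith

lemma L2 {x : ℝ} (hx : 0 ≤ x) : x - x ^ 3 / 3 ≤ arctan x := by
  have hm : MonotoneOn (fun x : ℝ => arctan x - x + x ^ 3 / 3) (Set.Ici 0) := by
    apply mono_Ici (f' := fun x => 1 / (1 + x ^ 2) - 1 + x ^ 2)
    · intro x
      exact (((hasDerivAt_arctan x).sub (hasDerivAt_id x)).add
        (by simpa using ((hasDerivAt_pow 3 x).div_const 3)))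
    · intro x _
      have h := one_add_sq_pos x
      rw [← sub_nonneg]
      have : 1 / (1 + x ^ 2) - 1 + x ^ 2 - 0 = x ^ 4 / (1 + x ^ 2) := by
        field_simp; ring
      rw [sub_zero] at this ⊢
      rw [this]
      positivity
  have := hm (self_mem_Ici) hx hx
  simp only [arctan_zero] at this
  linarith

lemma L3 {x : ℝ} (hx : 0 ≤ x) : x / (1 + x ^ 2) ≤ arctan x := by
  have hm : MonotoneOn (fun x : ℝ => arctan x - x / (1 + x ^ 2)) (Set.Ici 0) := by
    apply mono_Ici (f' := fun x => 1 / (1 + x ^ 2) - (1 - x ^ 2) / (1 + x ^ 2) ^ 2)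
    · intro x
      have h := (one_add_sq_pos x).ne'
      have hd : HasDerivAt (fun x : ℝ => x / (1 + x ^ 2))
          ((1 * (1 + x ^ 2) - x * (2 * x)) / (1 + x ^ 2) ^ 2) x := by
        exact (hasDerivAt_id x).div (by simpa using (hasDerivAt_pow 2 x).const_add 1) h
      have : (1 * (1 + x ^ 2) - x * (2 * x)) / (1 + x ^ 2) ^ 2
          = (1 - x ^ 2) / (1 + x ^ 2) ^ 2 := by ring_nf
      rw [this] at hd
      exact (hasDerivAt_arctan x).sub hd
    · intro x _
      have h := one_add_sq_pos x
      have : 1 / (1 + x ^ 2) - (1 - x ^ 2) / (1 + x ^ 2) ^ 2 = 2 * x ^ 2 / (1 + x ^ 2) ^ 2 := by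
        field_simp; ring
      rw [this]; positivity
  have := hm (self_mem_Ici) hx hx
  simp only [arctan_zero] at this
  linarith

lemma L4 {x : ℝ} (hx : 0 ≤ x) : arctan x ≤ π / 2 - x / (1 + x ^ 2) := by
  rcases eq_or_lt_of_le hx with h | h
  · simp [← h]; positivity
  · have h1 : arctan x⁻¹ = π / 2 - arctan x := arctan_inv_of_pos h
    have h2 : x⁻¹ / (1 + x⁻¹ ^ 2) ≤ arctan x⁻¹ := L3 (by positivity)
    have h3 : x⁻¹ / (1 + x⁻¹ ^ 2) = x / (1 + x ^ 2) := by
      field_simp; ring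
    rw [h3, h1] at h2
    linarith

lemma L5 {σ s : ℝ} (hσ : 0 ≤ σ) (hs : σ ≤ s) :
    (1 + σ ^ 2) * s / (1 + s ^ 2) - σ ^ 3 / 3 ≤ arctan s := by
  have hm : MonotoneOn (fun x : ℝ => arctan x - (1 + σ ^ 2) * x / (1 + x ^ 2)) (Set.Ici σ) := by
    apply mono_Ici (f' := fun x =>
      1 / (1 + x ^ 2) - ((1 + σ ^ 2) * (1 + x ^ 2) - (1 + σ ^ 2) * x * (2 * x)) / (1 + x ^ 2) ^ 2)
    · intro x
      have h := (one_add_sq_pos x).ne'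
      have hid : HasDerivAt (fun x : ℝ => (1 + σ ^ 2) * x) (1 + σ ^ 2) x := by
        simpa using (hasDerivAt_id x).const_mul (1 + σ ^ 2)
      have hg : HasDerivAt (fun x : ℝ => 1 + x ^ 2) (2 * x) x := by
        simpa using (hasDerivAt_pow 2 x).const_add 1
      have hd := hid.div hg h
      have hd' : HasDerivAt (fun x : ℝ => (1 + σ ^ 2) * x / (1 + x ^ 2))
          (((1 + σ ^ 2) * (1 + x ^ 2) - (1 + σ ^ 2) * x * (2 * x)) / (1 + x ^ 2) ^ 2) x := by
        exact hd
      exact (hasDerivAt_arctan x).sub hd'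
    · intro x hx
      have h := one_add_sq_pos x
      have hx2 : σ ^ 2 ≤ x ^ 2 := by nlinarith
      have : 1 / (1 + x ^ 2)
          - ((1 + σ ^ 2) * (1 + x ^ 2) - (1 + σ ^ 2) * x * (2 * x)) / (1 + x ^ 2) ^ 2
          = (2 * x ^ 2 - σ ^ 2 + σ ^ 2 * x ^ 2) / (1 + x ^ 2) ^ 2 := by
        field_simp; ring
      rw [this]
      have : 0 ≤ 2 * x ^ 2 - σ ^ 2 + σ ^ 2 * x ^ 2 := by nlinarith
      positivity
  have key := hm (self_mem_Ici) hs hs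
  have hσs : arctan σ - (1 + σ ^ 2) * σ / (1 + σ ^ 2) = arctan σ - σ := by
    field_simp
  simp only at key
  rw [hσs] at key
  have := L2 hσ
  linarith

private lemma pf_sσ (σ ρ s : ℝ) (hσ0 : 0 ≤ σ) (hρ0 : 0 ≤ ρ) (hs0 : 0 ≤ s)
    (hs2 : s^2 = ρ^2 + σ^2 + σ^2*ρ^2) : σ ≤ s ∧ ρ ≤ s := by
  constructor
  · nlinarith [sq_nonneg (s - σ), sq_nonneg (s + σ)]
  · nlinarith [sq_nonneg (s - ρ), sq_nonneg (s + ρ)]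

private lemma pf_s229 (σ ρ s : ℝ) (hσ0 : 0 ≤ σ) (hσ : σ ≤ 1/2) (hρ0 : 0 ≤ ρ) (hρ2 : ρ ≤ 2)
    (hs0 : 0 ≤ s) (hs2 : s^2 = ρ^2 + σ^2 + σ^2*ρ^2) : s ≤ 2.292 := by
  have hσ2 : σ^2 ≤ 1/4 := by nlinarith
  have hρ4 : ρ^2 ≤ 4 := by nlinarith
  have hs21 : s^2 ≤ 21/4 := by nlinarith
  nlinarith [sq_nonneg (s - 2.292)]

private lemma pf_v12 (s v : ℝ) (hs0 : 0 ≤ s) (hv : v * (1 + s^2) = s) : 0 ≤ v ∧ v ≤ 1/2 := by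
  have hden : (0:ℝ) < 1 + s^2 := by positivity
  constructor
  · nlinarith
  · nlinarith [sq_nonneg (s - 1)]

private lemma pf_v23 (p s v : ℝ) (hp4 : p < 3.15) (hs1 : 1 ≤ s) (hs229 : s ≤ 2.292)
    (hv : v * (1 + s^2) = s) : 23*p/200 ≤ v := by
  have hden : (0:ℝ) < 1 + s^2 := by positivity
  rw [div_le_iff₀ (by norm_num : (0:ℝ) < 200)]
  nlinarith [mul_nonneg (by linarith : (0:ℝ) ≤ s - 1) (by linarith : (0:ℝ) ≤ 2.292 - s)]

private lemma pf_t1 (σ ρ v : ℝ) (hσ0 : 0 ≤ σ) (hσ : σ ≤ 1/2) (hρ0 : 0 ≤ ρ)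
    (hv0 : 0 ≤ v) (hv12 : v ≤ 1/2) : v * ((1+σ^2)*ρ^2) ≤ 5/8 * ρ^2 := by
  have hσ2 : σ^2 ≤ 1/4 := by nlinarith
  have hσρ : σ^2*ρ^2 ≤ 1/4*ρ^2 := mul_le_mul_of_nonneg_right hσ2 (sq_nonneg ρ)
  have h1 : v*ρ^2 ≤ 1/2*ρ^2 := mul_le_mul_of_nonneg_right hv12 (sq_nonneg ρ)
  have h2 : v*(σ^2*ρ^2) ≤ 1/2*(1/4*ρ^2) :=
    mul_le_mul hv12 hσρ (by positivity) (by norm_num)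
  nlinarith [h1, h2]

set_option maxHeartbeats 1000000 in
lemma core (σ ρ : ℝ) (hσ0 : 0 ≤ σ) (hσ : σ ≤ 1/2) (hρ0 : 0 ≤ ρ) (hρ2 : ρ ≤ 2) :
    0 < FmrS σ ρ ∧ FmrS σ ρ ≤ 1 + 2*σ^3/(3*Real.pi) ∧
    Bmap σ ρ ≤ 3/5 * FmrS σ ρ ∧ 1 - FmrS σ ρ ≤ 5/12 * ρ^2 ∧
    (1 ≤ ρ → 23/50 ≤ FmrS σ ρ) ∧ 0 ≤ Bmap σ ρ := by
  have hp3 := Real.pi_gt_three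
  have hp4 := Real.pi_lt_d2
  have hppos : (0:ℝ) < π := by linarith
  have hc0 : (0:ℝ) ≤ 2/π := by positivity
  obtain ⟨s, hsdef⟩ : ∃ s, Real.sqrt (ρ^2 + σ^2 + σ^2*ρ^2) = s := ⟨_, rfl⟩
  have hs0 : 0 ≤ s := hsdef ▸ Real.sqrt_nonneg _
  have hs2 : s^2 = ρ^2 + σ^2 + σ^2*ρ^2 := by
    rw [← hsdef]; exact Real.sq_sqrt (by positivity)
  obtain ⟨hσs, hρs⟩ := pf_sσ σ ρ s hσ0 hρ0 hs0 hs2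
  have hs229 : s ≤ 2.292 := pf_s229 σ ρ s hσ0 hσ hρ0 hρ2 hs0 hs2
  have hfact : 1 + s^2 = (1+σ^2)*(1+ρ^2) := by rw [hs2]; ring
  have hden : (0:ℝ) < 1 + s^2 := by positivity
  have hdenρ : (0:ℝ) < 1 + ρ^2 := by positivity
  obtain ⟨a, hadef⟩ : ∃ a, Real.arctan s = a := ⟨_, rfl⟩
  obtain ⟨u, hudef⟩ : ∃ u, (1+σ^2)*s/(1+s^2) = u := ⟨_, rfl⟩
  obtain ⟨v, hvdef⟩ : ∃ v, s/(1+s^2) = v := ⟨_, rfl⟩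
  have hA : Amap σ ρ = 2/π * a := by rw [Amap, hsdef, hadef]
  have hu' : u = s/(1+ρ^2) := by
    rw [← hudef, hfact]
    exact mul_div_mul_left s (1+ρ^2) (by positivity)
  have hB : Bmap σ ρ = 2/π * u := by
    rw [Bmap, hsdef, hu', mul_div_assoc]
  have hF : FmrS σ ρ = 1 - 2/π*a + 2/π*u := by rw [FmrS, hA, hB]
  have ha1 : a ≤ s := hadef ▸ L1 hs0
  have ha3 : v ≤ a := hvdef ▸ hadef ▸ L3 hs0
  have ha4 : a ≤ π/2 - v := hvdef ▸ hadef ▸ L4 hs0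
  have ha5 : u - σ^3/3 ≤ a := by have := L5 hσ0 hσs; rw [hudef, hadef] at this; linarith
  have hveq : v * (1 + s^2) = s := by rw [← hvdef]; field_simp
  obtain ⟨hv0, hv12⟩ := pf_v12 s v hs0 hveq
  have ha0 : 0 ≤ a := le_trans hv0 ha3
  have huv : u = (1+σ^2)*v := by rw [← hudef, ← hvdef]; ring
  have hu0 : 0 ≤ u := by rw [huv]; positivity
  have h1eq : 2/π*(π/2) = 1 := by field_simp
  -- P2 : 0 < F
  have hP2 : 0 < FmrS σ ρ := by
    have h2 : 2/π*a < 1 := by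
      have h := mul_lt_mul_of_pos_left (Real.arctan_lt_pi_div_two s)
        (by positivity : (0:ℝ) < 2/π)
      rw [hadef, h1eq] at h
      exact h
    rw [hF]
    linarith [mul_nonneg hc0 hu0]
  -- P1 : F ≤ 1 + 2σ³/(3π)
  have hP1 : FmrS σ ρ ≤ 1 + 2*σ^3/(3*π) := by
    have h := mul_le_mul_of_nonneg_left (show u - a ≤ σ^3/3 by linarith) hc0
    have heq : 2*σ^3/(3*π) = 2/π*(σ^3/3) := by ring
    rw [hF, heq]
    linarith [h]
  -- P3 : B ≤ 3/5 F
  have hP3 : Bmap σ ρ ≤ 3/5 * FmrS σ ρ := by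
    have key : 2*u + 3*a ≤ 3*π/2 := by
      have hσ2 : σ^2 ≤ 1/4 := by nlinarith
      have hvv : (2*σ^2 - 1)*v ≤ 0 := by
        linarith [mul_nonneg hv0 (show (0:ℝ) ≤ 1 - 2*σ^2 by linarith)]
      linarith [huv, hvv, ha4]
    have h := mul_le_mul_of_nonneg_left key hc0
    have heq : 2/π*(3*π/2) = 3 := by field_simp
    rw [hB, hF]
    linarith [h, heq]
  -- P4 : 1 - F ≤ 5/12 ρ²
  have hP4 : 1 - FmrS σ ρ ≤ 5/12 * ρ^2 := by
    have hsu : s - u = v * ((1+σ^2)*ρ^2) := by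
      have h1 : s^2 - σ^2 = (1+σ^2)*ρ^2 := by rw [hs2]; ring
      rw [← hudef, ← hvdef]
      field_simp
      linear_combination s * h1
    have hm1 : 2/π*(a-u) ≤ 2/π*(s-u) := mul_le_mul_of_nonneg_left (by linarith) hc0
    have hc23 : 2/π ≤ 2/3 := by
      rw [div_le_div_iff₀ hppos (by norm_num : (0:ℝ) < 3)]; linarith
    have t1 : v * ((1+σ^2)*ρ^2) ≤ 5/8 * ρ^2 := pf_t1 σ ρ v hσ0 hσ hρ0 hv0 hv12
    have t0 : 0 ≤ v * ((1+σ^2)*ρ^2) := by positivity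
    have hm3 : 2/π*(v*((1+σ^2)*ρ^2)) ≤ 2/3*(5/8*ρ^2) :=
      mul_le_mul hc23 t1 t0 (by norm_num)
    have hm2 : 2/π*(s-u) = 2/π*(v*((1+σ^2)*ρ^2)) := by rw [hsu]
    rw [hF]
    linarith [hm1, hm2, hm3]
  -- P5 : 1 ≤ ρ → 23/50 ≤ F
  have hP5 : 1 ≤ ρ → 23/50 ≤ FmrS σ ρ := by
    intro hρ1
    have hs1 : 1 ≤ s := le_trans hρ1 hρs
    have hv23 : 23*π/200 ≤ v := pf_v23 π s v hp4 hs1 hs229 hveq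
    have hm1 : 2/π*a ≤ 2/π*(π/2 - v) := mul_le_mul_of_nonneg_left ha4 hc0
    have hm2 : 2/π*(π/2 - v) = 1 - 2/π*v := by rw [mul_sub, h1eq]
    have hm3 : 2/π*(23*π/200) ≤ 2/π*v := mul_le_mul_of_nonneg_left hv23 hc0
    have hm4 : 2/π*(23*π/200) = 23/100 := by field_simp; ring
    have hm6 : 2/π*v ≤ 2/π*u := by
      have huv' : v ≤ u := by
        have := mul_nonneg (sq_nonneg σ) hv0
        linarith [huv]
      exact mul_le_mul_of_nonneg_left huv' hc0
    rw [hF]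
    linarith [hm1, hm2, hm3, hm4, hm6]
  have hB0 : 0 ≤ Bmap σ ρ := by rw [hB]; positivity
  exact ⟨hP2, hP1, hP3, hP4, hP5, hB0⟩

private lemma sqrt_add_le' (a b : ℝ) (ha : 0 ≤ a) (hb : 0 ≤ b) :
    Real.sqrt (a + b) ≤ Real.sqrt a + Real.sqrt b := by
  have h := Real.sqrt_le_sqrt (show a + b ≤ (Real.sqrt a + Real.sqrt b)^2 by
    nlinarith [Real.sq_sqrt ha, Real.sq_sqrt hb, Real.sqrt_nonneg a, Real.sqrt_nonneg b])
  rwa [Real.sqrt_sq (by positivity)] at h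

private lemma pf_F2 (p σ F : ℝ) (hp3 : 3 < p) (hσ0 : 0 ≤ σ) (hσ : σ ≤ 1/2)
    (hF0 : 0 < F) (hF1 : F ≤ 1 + 2*σ^3/(3*p)) : F^2 ≤ 1 + σ^2/2 := by
  have hp0 : (0:ℝ) < p := by linarith
  have h9 : 2*σ^3/(3*p) ≤ 2*σ^3/9 := by
    apply div_le_div_of_nonneg_left (by positivity) (by norm_num) (by linarith)
  have hσ3 : σ^3 ≤ σ^2/2 := by nlinarith [sq_nonneg σ]
  have hF1' : F ≤ 1 + σ^2/9 := by linarith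
  have hσ4 : σ^4 ≤ σ^2/4 := by nlinarith [sq_nonneg σ, sq_nonneg (σ^2)]
  nlinarith [mul_le_mul hF1' hF1' hF0.le (by positivity), sq_nonneg σ]

private lemma pf_1F2 (σ ρ F p : ℝ) (hp3 : 3 < p) (hσ0 : 0 ≤ σ) (hσ : σ ≤ 1/2)
    (hρ0 : 0 ≤ ρ) (hF0 : 0 < F) (hF1 : F ≤ 1 + 2*σ^3/(3*p)) (h1F : 1 - F ≤ 5/12*ρ^2) :
    1 - F^2 ≤ ρ^2 := by
  have h9 : 2*σ^3/(3*p) ≤ 2*σ^3/9 := by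
    apply div_le_div_of_nonneg_left (by positivity) (by norm_num) (by linarith)
  have hσ3 : σ^3 ≤ 1/8 := by
    have := pow_le_pow_left₀ hσ0 hσ 3
    norm_num at this
    linarith
  have hF37 : F ≤ 37/36 := by nlinarith
  nlinarith [mul_nonneg (sub_nonneg.2 h1F) (show (0:ℝ) ≤ 1 + F by linarith),
    mul_le_mul_of_nonneg_left hF37 (sq_nonneg ρ), sq_nonneg ρ]

private lemma pf_final (σ ρ B F t : ℝ) (hσ0 : 0 ≤ σ) (hσ : σ ≤ 1/2) (hρ0 : 0 ≤ ρ)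
    (hρ2 : ρ ≤ 2) (hB0 : 0 ≤ B) (hF0 : 0 < F) (hBF : B ≤ 3/5*F)
    (h1F : 1 - F ≤ 5/12*ρ^2) (hF23 : 1 ≤ ρ → 23/50 ≤ F) (ht0 : 0 ≤ t) (ht : t ≤ 1/14) :
    (ρ*B + σ*t + ρ*t)/F ≤ 4/5*ρ + 2*σ*t := by
  rw [div_le_iff₀ hF0]
  rcases le_or_gt ρ 1 with hc | hc
  · have hF12 : 7/12 ≤ F := by nlinarith
    linarith [mul_le_mul_of_nonneg_left hBF hρ0,
      mul_nonneg (mul_nonneg hσ0 ht0) (show (0:ℝ) ≤ 2*F - 1 by linarith),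
      mul_nonneg hρ0 (show (0:ℝ) ≤ F/5 - t by linarith)]
  · have hF23' : 23/50 ≤ F := hF23 hc.le
    linarith [mul_le_mul_of_nonneg_left hBF hρ0,
      mul_le_mul_of_nonneg_left (show -2/25 ≤ 2*F - 1 by linarith) (mul_nonneg hσ0 ht0),
      mul_le_mul_of_nonneg_right (show σ ≤ ρ/2 by linarith) ht0,
      mul_le_mul_of_nonneg_left ht hρ0,
      mul_le_mul_of_nonneg_left hF23' hρ0]

/-- Sandwich bound for the ratio of the mixture-of-regressions Gordon maps. -/
theorem mixture_ratio_sandwich :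
    ∃ C : ℝ, 0 < C ∧
    ∀ σ : ℝ, 0 ≤ σ → σ ≤ 0.5 →
    ∀ κ : ℝ, 1 < κ → κ ≥ C →
    ∀ α β : ℝ, 0 < α → 0 ≤ β → β / α ≤ 2 →
      (1 + 2 * σ ^ 3 / (3 * Real.pi))⁻¹ *
          Real.sqrt ((β / α) ^ 2 * Bmap σ (β / α) ^ 2 * ((κ - 2) / (κ - 1))
            + σ ^ 2 / (2 * (κ - 1))) ≤
        GmrS κ σ (β / α) / FmrS σ (β / α) ∧
      GmrS κ σ (β / α) / FmrS σ (β / α) ≤ 4 / 5 * (β / α) + 2 * σ / Real.sqrt (κ - 1) := by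
  refine ⟨200, by norm_num, ?_⟩
  intro σ hσ0 hσ05 κ hκ1 hκC α β hα hβ hρle
  have hσ : σ ≤ 1/2 := by norm_num at hσ05; linarith
  have hp3 := Real.pi_gt_three
  obtain ⟨ρ, hρdef⟩ : ∃ x, β/α = x := ⟨_, rfl⟩
  rw [hρdef] at hρle ⊢
  have hρ0 : 0 ≤ ρ := hρdef ▸ div_nonneg hβ hα.le
  obtain ⟨hF0, hF1, hBF, h1F, hF23, hB0⟩ := core σ ρ hσ0 hσ hρ0 hρle
  have hκ2 : (0:ℝ) < κ - 1 := by linarith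
  have hκ199 : (199:ℝ) ≤ κ - 1 := by
    have : (200:ℝ) ≤ κ := hκC
    linarith
  obtain ⟨r, hrdef⟩ : ∃ r, Real.sqrt (κ-1) = r := ⟨_, rfl⟩
  rw [hrdef]
  have hr0 : 0 ≤ r := hrdef ▸ Real.sqrt_nonneg _
  have hr2 : r^2 = κ-1 := by rw [← hrdef]; exact Real.sq_sqrt hκ2.le
  have hr14 : 14 ≤ r := by nlinarith [sq_nonneg (r - 14), sq_nonneg (r + 14)]
  have hrpos : 0 < r := by linarith
  obtain ⟨F, hFdef⟩ : ∃ F, FmrS σ ρ = F := ⟨_, rfl⟩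
  obtain ⟨B, hBdef⟩ : ∃ B, Bmap σ ρ = B := ⟨_, rfl⟩
  rw [GmrS]
  rw [hFdef] at hF0 hF1 hBF h1F hF23 ⊢
  rw [hBdef] at hBF hB0 ⊢
  constructor
  · -- lower bound
    have hM0 : (0:ℝ) < 1 + 2*σ^3/(3*Real.pi) := by positivity
    have hF2 : F^2 ≤ 1 + σ^2/2 := pf_F2 Real.pi σ F hp3 hσ0 hσ hF0 hF1
    have hkey : ρ^2*B^2*((κ-2)/(κ-1)) + σ^2/(2*(κ-1)) ≤
        ρ^2*B^2 + 1/(κ-1)*(1+σ^2-F^2-ρ^2*B^2) := by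
      have hdiff : (ρ^2*B^2 + 1/(κ-1)*(1+σ^2-F^2-ρ^2*B^2)) -
          (ρ^2*B^2*((κ-2)/(κ-1)) + σ^2/(2*(κ-1))) = (1 + σ^2/2 - F^2)/(κ-1) := by
        field_simp
        ring
      have h0 : 0 ≤ (1 + σ^2/2 - F^2)/(κ-1) :=
        div_nonneg (by linarith) hκ2.le
      linarith
    calc (1 + 2*σ^3/(3*Real.pi))⁻¹ *
          Real.sqrt (ρ^2*B^2*((κ-2)/(κ-1)) + σ^2/(2*(κ-1)))
        = Real.sqrt (ρ^2*B^2*((κ-2)/(κ-1)) + σ^2/(2*(κ-1))) / (1 + 2*σ^3/(3*Real.pi)) := by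
          rw [inv_mul_eq_div]
      _ ≤ Real.sqrt (ρ^2*B^2*((κ-2)/(κ-1)) + σ^2/(2*(κ-1))) / F := by
          gcongr <;> first | exact hF0 | exact hF1 | positivity
      _ ≤ Real.sqrt (ρ^2*B^2 + 1/(κ-1)*(1+σ^2-F^2-ρ^2*B^2)) / F := by
          gcongr <;> first | exact hF0.le | exact hF0 | exact hkey | positivity
  · -- upper bound
    have h1F2 : 1 - F^2 ≤ ρ^2 := pf_1F2 σ ρ F Real.pi hp3 hσ0 hσ hρ0 hF0 hF1 h1F
    have hin : ρ^2*B^2 + 1/(κ-1)*(1+σ^2-F^2-ρ^2*B^2) ≤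
        ρ^2*B^2 + (σ^2/(κ-1) + ρ^2/(κ-1)) := by
      have h := mul_le_mul_of_nonneg_left
        (show 1+σ^2-F^2-ρ^2*B^2 ≤ σ^2+ρ^2 by
          nlinarith [mul_nonneg (sq_nonneg ρ) (sq_nonneg B)])
        (show (0:ℝ) ≤ 1/(κ-1) by positivity)
      have heq : 1/(κ-1)*(σ^2+ρ^2) = σ^2/(κ-1) + ρ^2/(κ-1) := by ring
      linarith
    have e1 : Real.sqrt (ρ^2*B^2) = ρ*B := by
      rw [show ρ^2*B^2 = (ρ*B)^2 by ring]
      exact Real.sqrt_sq (mul_nonneg hρ0 hB0)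
    have e2 : Real.sqrt (σ^2/(κ-1)) = σ/r := by
      rw [show σ^2/(κ-1) = (σ/r)^2 by rw [div_pow, hr2]]
      exact Real.sqrt_sq (by positivity)
    have e3 : Real.sqrt (ρ^2/(κ-1)) = ρ/r := by
      rw [show ρ^2/(κ-1) = (ρ/r)^2 by rw [div_pow, hr2]]
      exact Real.sqrt_sq (by positivity)
    have hs2 : Real.sqrt (ρ^2*B^2 + (σ^2/(κ-1) + ρ^2/(κ-1))) ≤ ρ*B + (σ/r + ρ/r) := by
      have h1 := sqrt_add_le' (ρ^2*B^2) (σ^2/(κ-1) + ρ^2/(κ-1)) (by positivity) (by positivity)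
      have h2 := sqrt_add_le' (σ^2/(κ-1)) (ρ^2/(κ-1)) (by positivity) (by positivity)
      rw [e1] at h1
      rw [e2, e3] at h2
      linarith
    have hG : Real.sqrt (ρ^2*B^2 + 1/(κ-1)*(1+σ^2-F^2-ρ^2*B^2)) ≤ ρ*B + (σ/r + ρ/r) :=
      le_trans (Real.sqrt_le_sqrt hin) hs2
    have ht : 1/r ≤ 1/14 := by
      rw [div_le_div_iff₀ hrpos (by norm_num : (0:ℝ) < 14)]
      linarith
    have hfin := pf_final σ ρ B F (1/r) hσ0 hσ hρ0 hρle hB0 hF0 hBF h1F hF23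
      (by positivity) ht
    calc Real.sqrt (ρ^2*B^2 + 1/(κ-1)*(1+σ^2-F^2-ρ^2*B^2)) / F
        ≤ (ρ*B + (σ/r + ρ/r)) / F := by
          gcongr <;> first | exact hF0.le | exact hF0 | exact hG | positivity
      _ = (ρ*B + σ*(1/r) + ρ*(1/r)) / F := by ring_nf
      _ ≤ 4/5*ρ + 2*σ*(1/r) := hfin
      _ = 4/5*ρ + 2*σ/r := by ring

end MRHelpers
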